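/- Let H be a finite group with a Sylow 2-subgroup P that is a T.I. subgroup (i.e., P ∩ P^h = 1 for all h ∈ H \ N_H(P)). If N_H(P) is 2-nilpotent, then H is 2-nilpotent. -/

import Mathlib

/-!
A T.I. Sylow subgroup `P` controls its own fusion: if `y ≠ 1` and `y, yˣ ∈ P` then
`x ∈ N_G(P)`, and in the `p`-nilpotent group `N_G(P) = P K` the normal `p`-complement `K`
centralises `P`. Hence the transfer `G → Pᵃᵇ` restricts to the `[G : P]`-th power map on `P`
and is onto, so its kernel `N` is a proper normal subgroup of `p`-power index. In `N` the Sylow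
subgroup `P ∩ N` is again T.I. with normalizer embedded in `N_G(P)`, so `N` is `p`-nilpotent
by induction on the order, and the normal `p`-complement of `N` (its set of `p'`-elements) is
a normal `p`-complement of `G`.
-/

/-- `G` is `p`-nilpotent: it has a normal Hall `p'`-subgroup. -/
def IsPNilpotent (p : ℕ) (G : Type*) [Group G] : Prop :=
  ∃ H : Subgroup G, H.Normal ∧ (Nat.card H).Coprime p ∧ ∃ n : ℕ, H.index = p ^ n

open Subgroup

namespace Subgroup

variable {G : Type*} [Group G] {p : ℕ} {K : Subgroup G} {x : G}

theorem coprime_orderOf_of_mem (hK : (Nat.card K).Coprime p) (hx : x ∈ K) :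
    (orderOf x).Coprime p :=
  hK.coprime_dvd_left (orderOf_dvd_natCard K hx)

theorem mem_of_coprime_orderOf [K.Normal] {n : ℕ} (hK : K.index = p ^ n)
    (hx : (orderOf x).Coprime p) : x ∈ K := by
  have hdvd : orderOf (x : G ⧸ K) ∣ p ^ n := hK ▸ _root_.orderOf_dvd_natCard _
  have hone : orderOf (x : G ⧸ K) = 1 :=
    Nat.eq_one_of_dvd_coprimes (hx.pow_right n) (orderOf_map_dvd (QuotientGroup.mk' K) x) hdvd
  rwa [orderOf_eq_one_iff, QuotientGroup.eq_one_iff] at hone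

theorem relIndex_mul_index_sup [Finite G] (H N : Subgroup G) [N.Normal] :
    H.relIndex N * (H ⊔ N).index = H.index := by
  have h₁ : H.relIndex N * N.index = N.relIndex H * H.index := by
    have := relIndex_inf_mul_relIndex H N ⊤
    have := relIndex_inf_mul_relIndex N H ⊤
    simp_all [inf_comm]
  have h₂ : N.relIndex H * (H ⊔ N).index = N.index := by
    rw [← relIndex_sup_right, relIndex_mul_index le_sup_right]
  rw [← h₂, mul_left_comm] at h₁
  have hNH : N.relIndex H ≠ 0 := index_ne_zero_of_finite
  exact Nat.eq_of_mul_eq_mul_left (Nat.pos_of_ne_zero hNH) h₁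

end Subgroup

namespace IsPNilpotent

variable {p : ℕ} {G : Type*} [Group G]

theorem of_coprime_card (hG : (Nat.card G).Coprime p) : IsPNilpotent p G :=
  ⟨⊤, inferInstance, by rwa [card_top], 0, by rw [index_top, pow_zero]⟩

theorem of_injective (hp : p.Prime) {G' : Type*} [Group G'] (h : IsPNilpotent p G')
    {f : G →* G'} (hf : Function.Injective f) : IsPNilpotent p G := by
  obtain ⟨K, hK, hcard, n, hindex⟩ := h
  obtain ⟨m, -, hm⟩ := (Nat.dvd_prime_pow hp).mp
    (hindex ▸ index_comap K f ▸ relIndex_dvd_index_of_normal K f.range)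
  exact ⟨K.comap f, inferInstance,
    hcard.coprime_dvd_left (card_comap_dvd_of_injective K f hf), m, hm⟩

theorem of_normal [Finite G] {N : Subgroup G} [N.Normal] (hN : IsPNilpotent p N) {a : ℕ}
    (hindex : N.index = p ^ a) : IsPNilpotent p G := by
  obtain ⟨K, hK, hcard, b, hKindex⟩ := hN
  have hmem : ∀ x : G, x ∈ K.map N.subtype ↔ (orderOf x).Coprime p := by
    refine fun x ↦ ⟨?_, fun hx ↦ ?_⟩
    · rintro ⟨y, hy, rfl⟩
      exact orderOf_coe y ▸ coprime_orderOf_of_mem hcard hy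
    · have hxN : x ∈ N := mem_of_coprime_orderOf hindex hx
      exact ⟨⟨x, hxN⟩, mem_of_coprime_orderOf hKindex (by rwa [orderOf_mk]), rfl⟩
  refine ⟨K.map N.subtype, ⟨fun x hx g ↦ ?_⟩, ?_, b + a, ?_⟩
  · rw [hmem] at hx ⊢
    simpa using ((MulAut.conj g).orderOf_eq x).symm ▸ hx
  · rwa [Nat.card_congr (K.equivMapOfInjective _ N.subtype_injective).toEquiv.symm]
  · rw [index_map_subtype, hKindex, hindex, pow_add]

end IsPNilpotent

namespace Sylow

variable {p : ℕ} [Fact p.Prime] {G : Type*} [Group G] [Finite G]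

def subgroupOfNormal (P : Sylow p G) (N : Subgroup G) [N.Normal] : Sylow p N :=
  (P.2.comap_subtype (K := N)).toSylow fun h ↦ P.not_dvd_index <|
    h.trans ⟨_, (relIndex_mul_index_sup (P : Subgroup G) N).symm⟩

theorem coprime_card_of_eq_bot (P : Sylow p G) (hP : (P : Subgroup G) = ⊥) :
    (Nat.card G).Coprime p := by
  have := P.not_dvd_index
  rw [hP, index_bot] at this
  exact (Nat.Prime.coprime_iff_not_dvd Fact.out).mpr this |>.symm

end Sylow

namespace Subgroup

variable {G : Type*} [Group G]

def IsTI (P : Subgroup G) : Prop :=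
  ∀ h : G, h ∉ normalizer (P : Set G) → P ⊓ P.map (MulAut.conj h : G →* G) = ⊥

def ControlsOwnFusion (P : Subgroup G) : Prop :=
  ∀ y ∈ P, ∀ x : G, x⁻¹ * y * x ∈ P → ∃ u ∈ P, x⁻¹ * y * x = u⁻¹ * y * u

namespace IsTI

variable {P : Subgroup G} (hP : P.IsTI)
include hP

theorem mem_normalizer_of_conj_mem {x y : G} (hy : y ∈ P) (hy1 : y ≠ 1)
    (hxy : x⁻¹ * y * x ∈ P) : x ∈ normalizer (P : Set G) := by
  by_contra hx
  have hmem : y ∈ P ⊓ P.map (MulAut.conj x : G →* G) :=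
    ⟨hy, x⁻¹ * y * x, hxy, by simp [mul_assoc]⟩
  exact hy1 (by rwa [hP x hx, mem_bot] at hmem)

theorem subgroupOf (K : Subgroup G) : (P.subgroupOf K).IsTI := by
  intro h hh
  have hhP : (h : G) ∉ normalizer (P : Set G) := fun hn ↦ hh fun z ↦ by
    simpa [mem_subgroupOf] using hn z
  rw [eq_bot_iff_forall]
  rintro z ⟨hz, w, hw, hwz⟩
  have hmem : (z : G) ∈ P ⊓ P.map (MulAut.conj (h : G) : G →* G) :=
    ⟨hz, w, hw, by simp [← hwz]⟩
  rw [hP h hhP, mem_bot] at hmem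
  exact Subtype.ext hmem

theorem mem_normalizer_of_mem_normalizer_subgroupOf {K : Subgroup G}
    (hPK : P.subgroupOf K ≠ ⊥) {m : K} (hm : m ∈ normalizer (P.subgroupOf K : Set K)) :
    (m : G) ∈ normalizer (P : Set G) := by
  obtain ⟨x, hx, hx1⟩ := (P.subgroupOf K).bot_or_exists_ne_one.resolve_left hPK
  refine hP.mem_normalizer_of_conj_mem ((hm x).mp hx) (by simpa using hx1) ?_
  simpa [mul_assoc] using mem_subgroupOf.mp hx

theorem controlsOwnFusion
    (hN : (P.subgroupOf (normalizer (P : Set G))).ControlsOwnFusion) : P.ControlsOwnFusion := by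
  intro y hy x hxy
  obtain rfl | hy1 := eq_or_ne y 1
  · exact ⟨1, P.one_mem, by simp⟩
  have hx := hP.mem_normalizer_of_conj_mem hy hy1 hxy
  obtain ⟨u, hu, hconj⟩ := hN ⟨y, le_normalizer hy⟩ hy ⟨x, hx⟩ hxy
  exact ⟨u, hu, congrArg Subtype.val hconj⟩

end IsTI

end Subgroup

theorem IsPNilpotent.controlsOwnFusion {p : ℕ} [Fact p.Prime] {G : Type*} [Group G] [Finite G]
    (hG : IsPNilpotent p G) (P : Sylow p G) [(P : Subgroup G).Normal] :
    (P : Subgroup G).ControlsOwnFusion := by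
  obtain ⟨K, hK, hcard, n, hindex⟩ := hG
  have hdisj : Disjoint (P : Subgroup G) K := by
    obtain ⟨m, hm⟩ := IsPGroup.iff_card.mp P.isPGroup'
    exact disjoint_of_coprime_natCard (hm ▸ (hcard.pow_right m).symm)
  have hsup : (P : Subgroup G) ⊔ K = ⊤ := by
    have hPdvd : ((P : Subgroup G) ⊔ K).index ∣ (P : Subgroup G).index :=
      index_dvd_of_le le_sup_left
    have hKdvd : ((P : Subgroup G) ⊔ K).index ∣ p ^ n := hindex ▸ index_dvd_of_le le_sup_right
    have hcop : (p ^ n).Coprime (P : Subgroup G).index :=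
      ((Nat.Prime.coprime_iff_not_dvd Fact.out).mpr P.not_dvd_index).pow_left n
    exact index_eq_one.mp (Nat.eq_one_of_dvd_coprimes hcop hKdvd hPdvd)
  intro y hy x _
  obtain ⟨u, hu, k, hk, rfl⟩ := mem_sup_of_normal_right.mp (hsup ▸ mem_top x)
  have hyu : u⁻¹ * y * u ∈ (P : Subgroup G) := by
    simpa [mul_assoc] using ‹(P : Subgroup G).Normal›.conj_mem y hy u⁻¹
  have hcomm : Commute k (u⁻¹ * y * u) :=
    (commute_of_normal_of_disjoint _ _ inferInstance hK hdisj _ _ hyu hk).symm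
  refine ⟨u, hu, ?_⟩
  calc (u * k)⁻¹ * y * (u * k) = k⁻¹ * (u⁻¹ * y * u) * k := by group
    _ = u⁻¹ * y * u := by rw [mul_assoc, ← hcomm.eq, inv_mul_cancel_left]

theorem Subgroup.ControlsOwnFusion.transfer_eq_pow {G A : Type*} [Group G] [CommGroup A]
    {H : Subgroup G} [H.FiniteIndex] (hH : H.ControlsOwnFusion) (ϕ : H →* A) {g : G}
    (hg : g ∈ H) : ϕ.transfer g = ϕ ⟨g, hg⟩ ^ H.index := by
  classical
  let := Fintype.ofFinite (Quotient (MulAction.orbitRel (zpowers g) (G ⧸ H)))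
  rw [MonoidHom.transfer_eq_prod_quotient_orbitRel_zpowers_quot, index_eq_sum_minimalPeriod H g,
    ← Finset.prod_pow_eq_pow_sum]
  refine Finset.prod_congr rfl fun q _ ↦ ?_
  obtain ⟨u, hu, hconj⟩ := hH _ (pow_mem hg _) _
    (QuotientGroup.out_conj_pow_minimalPeriod_mem H g q.out)
  rw [show (⟨_, QuotientGroup.out_conj_pow_minimalPeriod_mem H g q.out⟩ : H) =
      ⟨u, hu⟩⁻¹ * ⟨g, hg⟩ ^ Function.minimalPeriod (g • ·) q.out * ⟨u, hu⟩ from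
      Subtype.ext (by simpa using hconj),
    map_mul, map_mul, map_inv, map_pow, mul_comm, mul_inv_cancel_left]

theorem Sylow.exists_normal_ne_top_index_eq_pow {p : ℕ} [Fact p.Prime] {G : Type*} [Group G]
    [Finite G] (P : Sylow p G) (hP : (P : Subgroup G) ≠ ⊥)
    (hfus : (P : Subgroup G).ControlsOwnFusion) :
    ∃ N : Subgroup G, N.Normal ∧ N ≠ ⊤ ∧ ∃ n : ℕ, N.index = p ^ n := by
  have hAb : IsPGroup p (Abelianization P) := P.isPGroup'.to_quotient _
  let τ : G →* Abelianization P := (Abelianization.of : P →* Abelianization P).transfer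
  -- on `P`, `τ` is the `[G : P]`-th power map, which is bijective on the `p`-group `Pᵃᵇ`
  have hτ : Function.Surjective τ := by
    intro z
    obtain ⟨w, rfl⟩ := (hAb.powEquiv' P.not_dvd_index).surjective z
    obtain ⟨v, rfl⟩ := QuotientGroup.mk_surjective w
    exact ⟨v, hfus.transfer_eq_pow _ v.2⟩
  have : Nontrivial P := (nontrivial_iff_ne_bot _).mpr hP
  have : Group.IsNilpotent P := P.isPGroup'.isNilpotent
  have : Nontrivial (Abelianization P) := QuotientGroup.nontrivial_iff.mpr
    (Group.IsSolvable.commutator_lt_top_of_nontrivial P).ne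
  have : Finite (Abelianization P) := Quotient.finite _
  obtain ⟨n, hn⟩ := IsPGroup.iff_card.mp hAb
  have hindex : τ.ker.index = p ^ n := by
    rw [index_ker, MonoidHom.range_eq_top.mpr hτ, card_top, hn]
  refine ⟨τ.ker, inferInstance, fun htop ↦ ?_, n, hindex⟩
  rw [htop, index_top, ← hn] at hindex
  exact Finite.one_lt_card.ne hindex

theorem Subgroup.IsTI.isPNilpotent_normalizer_subgroupOf {p : ℕ} (hp : p.Prime) {G : Type*}
    [Group G] {P : Subgroup G} (hP : P.IsTI) (hN : IsPNilpotent p (normalizer (P : Set G)))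
    {K : Subgroup G} (hPK : P.subgroupOf K ≠ ⊥) :
    IsPNilpotent p (normalizer (P.subgroupOf K : Set K)) :=
  hN.of_injective hp (f := (K.subtype.comp (normalizer _).subtype).codRestrict _
    fun m ↦ hP.mem_normalizer_of_mem_normalizer_subgroupOf hPK m.2)
    fun _ _ h ↦ Subtype.ext <| Subtype.ext <|
      congrArg (Subtype.val : normalizer (P : Set G) → G) h

theorem Sylow.isPNilpotent_of_isTI {p : ℕ} [Fact p.Prime] {G : Type*} [Group G] [Finite G]
    (P : Sylow p G) (hTI : (P : Subgroup G).IsTI)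
    (hN : IsPNilpotent p (normalizer ((P : Subgroup G) : Set G))) : IsPNilpotent p G := by
  induction hcard : Nat.card G using Nat.strong_induction_on generalizing G with
  | _ n ih =>
  obtain hP | hP := eq_or_ne (P : Subgroup G) ⊥
  · exact .of_coprime_card (P.coprime_card_of_eq_bot hP)
  have : (P.subtype le_normalizer : Subgroup (normalizer (P : Set G))).Normal := by
    rw [Sylow.coe_subtype]
    exact normal_in_normalizer
  obtain ⟨N, _, hNtop, a, hindex⟩ := P.exists_normal_ne_top_index_eq_pow hP
    (hTI.controlsOwnFusion (hN.controlsOwnFusion (P.subtype le_normalizer)))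
  refine IsPNilpotent.of_normal (N := N) ?_ hindex
  let P₀ := P.subgroupOfNormal N
  by_cases hP₀ : (P₀ : Subgroup N) = ⊥
  · exact .of_coprime_card (P₀.coprime_card_of_eq_bot hP₀)
  have hlt : Nat.card N < n := by
    rw [← hcard]
    exact (card_le_card_group N).lt_of_ne ((card_eq_iff_eq_top N).not.mpr hNtop)
  exact ih _ hlt P₀ (hTI.subgroupOf N)
    (hTI.isPNilpotent_normalizer_subgroupOf Fact.out hN hP₀) rfl

/-- If a Sylow `2`-subgroup `P` of `H` is a T.I. subgroup and `N_H(P)` is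
`2`-nilpotent, then `H` is `2`-nilpotent. -/
theorem twoNilpotent_of_TI_sylow
    {H : Type*} [Group H] [Finite H] (P : Sylow 2 H)
    (hTI : ∀ h : H, h ∉ Subgroup.normalizer ((P : Subgroup H) : Set H) →
      (P : Subgroup H) ⊓ (P : Subgroup H).map (MulAut.conj h : H →* H) = ⊥)
    (hN : IsPNilpotent 2 ↥(Subgroup.normalizer ((P : Subgroup H) : Set H))) :
    IsPNilpotent 2 H :=
  have : Fact (Nat.Prime 2) := ⟨Nat.prime_two⟩
  P.isPNilpotent_of_isTI hTI hN
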